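/- arXiv:1508.07044 — 8 statements merged into one kernel-verified Lean document; each statement's English description precedes it below -/
import Mathlib

section
/- The set Γ of sequences g ∈ (0,∞)^ℕ such that ∑_{n} |∏_{k≤n} g_k − 1| < ∞ is a subgroup of the multiplicative group (0,∞)^ℕ (with pointwise multiplication): it contains the constant sequence 1, is closed under pointwise multiplication, and is closed under pointwise inversion. -/
/-!
A sequence `p` with `∑ ‖p n - 1‖ < ∞` tends to `1`, so `p` and (eventually) `p⁻¹` are bounded.
The identities `p q - 1 = p (q - 1) + (p - 1)` and `p⁻¹ - 1 = p⁻¹ (1 - p)` then bound the distances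
of `p q` and `p⁻¹` to `1` by summable sequences. Since partial products are multiplicative and
commute with inversion, this is exactly the subgroup property of `Γ`.
-/

open Finset

/-- The set Γ of positive sequences whose partial products are absolutely
summably close to 1. -/
def Gamma : Set (ℕ → ℝ) :=
  {g | (∀ n, 0 < g n) ∧ Summable (fun n => |(∏ k ∈ Finset.range (n + 1), g k) - 1|)}

open Filter

lemma tendsto_one_of_summable_norm_sub_one {E : Type*} [SeminormedAddCommGroup E] [One E]
    {p : ℕ → E} (hp : Summable fun n => ‖p n - 1‖) : Tendsto p atTop (nhds 1) :=
  tendsto_iff_norm_sub_tendsto_zero.2 hp.tendsto_atTop_zero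

lemma summable_norm_mul_sub_one {R : Type*} [SeminormedRing R] {p q : ℕ → R}
    (hp : Summable fun n => ‖p n - 1‖) (hq : Summable fun n => ‖q n - 1‖) :
    Summable fun n => ‖p n * q n - 1‖ := by
  obtain ⟨C, hC⟩ := (tendsto_one_of_summable_norm_sub_one hp).norm.bddAbove_range
  refine .of_nonneg_of_le (fun n => norm_nonneg _) (fun n => ?_) ((hq.mul_left C).add hp)
  calc ‖p n * q n - 1‖ = ‖p n * (q n - 1) + (p n - 1)‖ := by congr 1; noncomm_ring
    _ ≤ ‖p n * (q n - 1)‖ + ‖p n - 1‖ := norm_add_le _ _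
    _ ≤ ‖p n‖ * ‖q n - 1‖ + ‖p n - 1‖ := by gcongr; exact norm_mul_le _ _
    _ ≤ C * ‖q n - 1‖ + ‖p n - 1‖ := by gcongr; exact hC ⟨n, rfl⟩

lemma summable_norm_inv_sub_one {K : Type*} [NormedDivisionRing K] {p : ℕ → K}
    (hp : Summable fun n => ‖p n - 1‖) : Summable fun n => ‖(p n)⁻¹ - 1‖ := by
  have hlim := tendsto_one_of_summable_norm_sub_one hp
  have hlim_inv : Tendsto (fun n => (p n)⁻¹) atTop (nhds 1) := by
    simpa using hlim.inv₀ one_ne_zero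
  obtain ⟨C, hC⟩ := hlim_inv.norm.bddAbove_range
  refine .of_norm_bounded_eventually_nat (hp.mul_left C) ?_
  filter_upwards [hlim.eventually_ne one_ne_zero] with n hn
  calc ‖‖(p n)⁻¹ - 1‖‖ = ‖(p n)⁻¹ * (1 - p n)‖ := by
        rw [norm_norm, mul_sub, mul_one, inv_mul_cancel₀ hn]
    _ ≤ C * ‖p n - 1‖ := by rw [norm_mul, norm_sub_rev]; gcongr; exact hC ⟨n, rfl⟩

lemma mem_Gamma_iff {g : ℕ → ℝ} :
    g ∈ Gamma ↔ (∀ n, 0 < g n) ∧ Summable fun n => ‖(∏ k ∈ range (n + 1), g k) - 1‖ := by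
  simp only [Gamma, Set.mem_ofPred_eq, Real.norm_eq_abs]

theorem gamma_subgroup :
    ((fun _ => 1 : ℕ → ℝ) ∈ Gamma) ∧
    (∀ g h : ℕ → ℝ, g ∈ Gamma → h ∈ Gamma → (fun n => g n * h n) ∈ Gamma) ∧
    (∀ g : ℕ → ℝ, g ∈ Gamma → (fun n => (g n)⁻¹) ∈ Gamma) := by
  simp only [mem_Gamma_iff]
  refine ⟨⟨fun _ => one_pos, by simp⟩, ?_, ?_⟩
  · rintro g h ⟨hg, hgs⟩ ⟨hh, hhs⟩
    refine ⟨fun n => mul_pos (hg n) (hh n), ?_⟩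
    simpa only [prod_mul_distrib] using summable_norm_mul_sub_one hgs hhs
  · rintro g ⟨hg, hgs⟩
    refine ⟨fun n => inv_pos.2 (hg n), ?_⟩
    simpa only [prod_inv_distrib] using summable_norm_inv_sub_one hgs
end

section
/- If g, h ∈ Γ, then ∑_n |∏_{k≤n} g_k h_k − 1| ≤ ∑_{n<n₀} |∏_{k≤n} g_k h_k − 1| + (3/2)·∑_n |∏_{k≤n} h_k − 1| + ∑_n |∏_{k≤n} g_k − 1| for any n₀ such that |∏_{k≤n} g_k − 1| ≤ 1/2 for all n ≥ n₀; in particular the pointwise product gh belongs to Γ. -/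
/-! With `G n = ∏ k ≤ n, g k` and `H n` likewise, `G H - 1 = G (H - 1) + (G - 1)` and `|G| ≤ 3/2` once
`|G - 1| ≤ 1/2`, so from `n₀` on the terms of the product series are dominated by `3/2 |H - 1| + |G - 1|`. -/

open Finset

theorem abs_mul_sub_one_le_of_abs_sub_one_le {x y c : ℝ} (hx : |x - 1| ≤ c) :
    |x * y - 1| ≤ (1 + c) * |y - 1| + |x - 1| := by
  have hx' : |x| ≤ 1 + c := by linarith [abs_sub_abs_le_abs_sub x 1, abs_one (α := ℝ)]
  calc |x * y - 1| = |x * (y - 1) + (x - 1)| := by ring_nf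
    _ ≤ |x| * |y - 1| + |x - 1| := by rw [← abs_mul]; exact abs_add_le _ _
    _ ≤ (1 + c) * |y - 1| + |x - 1| := by gcongr

theorem summable_of_nonneg_of_le_of_ge {f b : ℕ → ℝ} (hf : ∀ n, 0 ≤ f n) (hb : Summable b)
    {n₀ : ℕ} (hfb : ∀ n ≥ n₀, f n ≤ b n) : Summable f :=
  hb.of_norm_bounded_eventually_nat <| Filter.eventually_atTop.2
    ⟨n₀, fun n hn => by rw [Real.norm_of_nonneg (hf n)]; exact hfb n hn⟩

theorem tsum_le_sum_range_add_tsum_of_le_of_ge {f b : ℕ → ℝ} (hf : Summable f)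
    (hb : Summable b) (hb₀ : ∀ n, 0 ≤ b n) {n₀ : ℕ} (hfb : ∀ n ≥ n₀, f n ≤ b n) :
    ∑' n, f n ≤ ∑ n ∈ range n₀, f n + ∑' n, b n := by
  rw [← hf.sum_add_tsum_nat_add n₀]
  refine add_le_add_right ?_ _
  exact ((summable_nat_add_iff n₀).2 hf).tsum_le_tsum_of_inj (· + n₀) (add_left_injective n₀)
    (fun n _ => hb₀ n) (fun n => hfb _ (Nat.le_add_left _ _)) hb

theorem gamma_mul_estimate_general (g h : ℕ → ℝ)
    (hg : Summable (fun n => |(∏ k ∈ Finset.range (n + 1), g k) - 1|))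
    (hh : Summable (fun n => |(∏ k ∈ Finset.range (n + 1), h k) - 1|))
    (n₀ : ℕ)
    (hn₀ : ∀ n ≥ n₀, |(∏ k ∈ Finset.range (n + 1), g k) - 1| ≤ 1 / 2) :
    Summable (fun n => |(∏ k ∈ Finset.range (n + 1), g k * h k) - 1|) ∧
    (∑' n, |(∏ k ∈ Finset.range (n + 1), g k * h k) - 1|) ≤
      (∑ n ∈ Finset.range n₀, |(∏ k ∈ Finset.range (n + 1), g k * h k) - 1|) +
      (3 / 2) * (∑' n, |(∏ k ∈ Finset.range (n + 1), h k) - 1|) +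
      (∑' n, |(∏ k ∈ Finset.range (n + 1), g k) - 1|) := by
  simp only [prod_mul_distrib]
  have hbound : ∀ n ≥ n₀, |(∏ k ∈ range (n + 1), g k) * (∏ k ∈ range (n + 1), h k) - 1| ≤
      3 / 2 * |(∏ k ∈ range (n + 1), h k) - 1| + |(∏ k ∈ range (n + 1), g k) - 1| := by
    intro n hn
    convert abs_mul_sub_one_le_of_abs_sub_one_le (hn₀ n hn) using 2
    norm_num
  have hsum := (hh.mul_left (3 / 2)).add hg
  have hprod := summable_of_nonneg_of_le_of_ge (fun _ => abs_nonneg _) hsum hbound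
  refine ⟨hprod, ?_⟩
  rw [add_assoc, ← tsum_mul_left, ← hh.mul_left _ |>.tsum_add hg]
  exact tsum_le_sum_range_add_tsum_of_le_of_ge hprod hsum (fun _ => by positivity) hbound

theorem gamma_mul_estimate (g h : ℕ → ℝ)
    (hgpos : ∀ n, 0 < g n) (hhpos : ∀ n, 0 < h n)
    (hg : Summable (fun n => |(∏ k ∈ Finset.range (n + 1), g k) - 1|))
    (hh : Summable (fun n => |(∏ k ∈ Finset.range (n + 1), h k) - 1|))
    (n₀ : ℕ)
    (hn₀ : ∀ n ≥ n₀, |(∏ k ∈ Finset.range (n + 1), g k) - 1| ≤ 1 / 2) :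
    Summable (fun n => |(∏ k ∈ Finset.range (n + 1), g k * h k) - 1|) ∧
    (∑' n, |(∏ k ∈ Finset.range (n + 1), g k * h k) - 1|) ≤
      (∑ n ∈ Finset.range n₀, |(∏ k ∈ Finset.range (n + 1), g k * h k) - 1|) +
      (3 / 2) * (∑' n, |(∏ k ∈ Finset.range (n + 1), h k) - 1|) +
      (∑' n, |(∏ k ∈ Finset.range (n + 1), g k) - 1|) :=
  gamma_mul_estimate_general g h hg hh n₀ hn₀
end

section
/- The map Φ sending a sequence a ∈ (0,∞)^ℕ to the sequence ((∏_{k≤n} a_k) − 1)_n restricts to an isometry from (Γ, d_Γ) onto a subset of ℓ¹ with the ℓ¹-metric; moreover its image Φ[Γ] equals the set of b ∈ ℓ¹ with b_n > −1 for all n, which is an open (in particular G_δ) subset of ℓ¹. -/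
open Finset

noncomputable def dGamma (g h : ℕ → ℝ) : ℝ :=
  ∑' n, |(∏ k ∈ Finset.range (n + 1), g k) - (∏ k ∈ Finset.range (n + 1), h k)|

/-!
Φ sends `g` to its sequence of partial products minus one, so the ℓ¹ distance between `Φ g` and
`Φ h` is `d_Γ(g, h)` term by term. A sequence of nonzero factors is recovered from its partial
products as their successive ratios; this gives injectivity, and for any `b ∈ ℓ¹` with `b > -1`
the successive ratios of `b + 1` form a preimage in `Γ`. The image is open because an ℓ¹ sequence
tends to `0`, so its terms stay uniformly away from `-1`, while each coordinate is 1-Lipschitz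
for the ℓ¹ norm.
-/

open Filter Topology

section PartialProducts

variable {M : Type*} [CommMonoid M]

def partialProds (g : ℕ → M) (n : ℕ) : M :=
  ∏ k ∈ range (n + 1), g k

@[simp]
lemma partialProds_zero (g : ℕ → M) : partialProds g 0 = g 0 := by
  simp [partialProds]

lemma partialProds_succ (g : ℕ → M) (n : ℕ) :
    partialProds g (n + 1) = partialProds g n * g (n + 1) :=
  prod_range_succ g (n + 1)

end PartialProducts

section SuccessiveRatios

variable {G₀ : Type*} [CommGroupWithZero G₀]

def successiveRatios (P : ℕ → G₀) : ℕ → G₀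
  | 0 => P 0
  | n + 1 => P (n + 1) / P n

lemma partialProds_ne_zero {g : ℕ → G₀} (hg : ∀ n, g n ≠ 0) (n : ℕ) : partialProds g n ≠ 0 :=
  prod_ne_zero_iff.2 fun k _ => hg k

lemma partialProds_successiveRatios {P : ℕ → G₀} (hP : ∀ n, P n ≠ 0) :
    partialProds (successiveRatios P) = P := by
  funext n
  induction n with
  | zero => simp [successiveRatios]
  | succ n ih => rw [partialProds_succ, ih, successiveRatios, mul_div_cancel₀ _ (hP n)]

lemma successiveRatios_partialProds {g : ℕ → G₀} (hg : ∀ n, g n ≠ 0) :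
    successiveRatios (partialProds g) = g := by
  funext n
  cases n with
  | zero => simp [successiveRatios]
  | succ n =>
    rw [successiveRatios, partialProds_succ, mul_div_cancel_left₀ _ (partialProds_ne_zero hg n)]

lemma partialProds_injOn : Set.InjOn (partialProds (M := G₀)) {g | ∀ n, g n ≠ 0} :=
  fun g hg h hh hgh => by
    rw [← successiveRatios_partialProds hg, hgh, successiveRatios_partialProds hh]

end SuccessiveRatios

section Ordered

variable {K : Type*} [Field K] [LinearOrder K] [IsStrictOrderedRing K]

lemma partialProds_pos {g : ℕ → K} (hg : ∀ n, 0 < g n) (n : ℕ) : 0 < partialProds g n :=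
  prod_pos fun k _ => hg k

lemma successiveRatios_pos {P : ℕ → K} (hP : ∀ n, 0 < P n) (n : ℕ) : 0 < successiveRatios P n := by
  cases n with
  | zero => exact hP 0
  | succ n => exact div_pos (hP (n + 1)) (hP n)

end Ordered

lemma exists_gt_forall_le_of_tendsto {α : Type*} [LinearOrder α] [TopologicalSpace α]
    [OrderTopology α] [DenselyOrdered α] {f : ℕ → α} {c l : α} (hf : ∀ n, c < f n)
    (hcl : c < l) (hlim : Tendsto f atTop (𝓝 l)) : ∃ δ, c < δ ∧ ∀ n, δ ≤ f n := by
  obtain ⟨δ₀, hcδ₀, hδ₀l⟩ := exists_between hcl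
  obtain ⟨N, hN⟩ := (hlim.eventually (eventually_gt_nhds hδ₀l)).exists_forall_of_atTop
  obtain ⟨m, -, hm⟩ := (range (N + 1)).exists_min_image f nonempty_range_add_one
  refine ⟨min δ₀ (f m), lt_min hcδ₀ (hf m), fun n => ?_⟩
  rcases le_or_gt N n with hNn | hnN
  · exact (min_le_left _ _).trans (hN n hNn).le
  · exact (min_le_right _ _).trans (hm n (mem_range.2 (by omega)))

namespace lp

variable {α : Type*} {E : α → Type*} [∀ i, NormedAddCommGroup (E i)]

lemma memℓp_one_iff {f : ∀ i, E i} : Memℓp f 1 ↔ Summable fun i => ‖f i‖ := by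
  simpa using memℓp_gen_iff (p := 1) (f := f) (by norm_num)

lemma dist_eq_tsum_of_one (f g : lp E 1) : dist f g = ∑' i, dist (f i) (g i) := by
  simpa [dist_eq_norm] using norm_eq_tsum_rpow (p := 1) (by norm_num) (f - g)

lemma isOpen_setOf_forall_lt_apply {c : ℝ} (hc : c < 0) :
    IsOpen {b : lp (fun _ : ℕ => ℝ) 1 | ∀ n, c < b n} := by
  refine Metric.isOpen_iff.2 fun b hb => ?_
  have hb0 : Tendsto (b : ℕ → ℝ) atTop (𝓝 0) :=
    (lp.memℓp b).summable_of_one.tendsto_atTop_zero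
  obtain ⟨δ, hcδ, hδ⟩ := exists_gt_forall_le_of_tendsto hb hc hb0
  refine ⟨δ - c, sub_pos.2 hcδ, fun b' hb' n => ?_⟩
  have hdist : |b' n - b n| < δ - c :=
    (norm_apply_le_norm one_ne_zero (b' - b) n).trans_lt (mem_ball_iff_norm.1 hb')
  linarith [abs_lt.1 hdist, hδ n]

end lp

namespace Gamma

noncomputable def toEll1 (g : Gamma) : lp (fun _ : ℕ => ℝ) 1 :=
  ⟨fun n => partialProds (g : ℕ → ℝ) n - 1,
    lp.memℓp_one_iff.2 (by simpa [partialProds] using g.2.2)⟩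

lemma toEll1_apply (g : Gamma) (n : ℕ) : toEll1 g n = partialProds (g : ℕ → ℝ) n - 1 := rfl

lemma dist_toEll1 (g h : Gamma) : dist (toEll1 g) (toEll1 h) = dGamma g h := by
  rw [lp.dist_eq_tsum_of_one, dGamma]
  refine tsum_congr fun n => ?_
  rw [toEll1_apply, toEll1_apply, Real.dist_eq, sub_sub_sub_cancel_right, partialProds,
    partialProds]

lemma toEll1_injective : Function.Injective toEll1 := fun g h hgh => by
  refine Subtype.ext (partialProds_injOn (fun n => (g.2.1 n).ne') (fun n => (h.2.1 n).ne') ?_)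
  funext n
  simpa [toEll1_apply] using congrArg (fun b : lp (fun _ : ℕ => ℝ) 1 => b n) hgh

lemma range_toEll1 : Set.range toEll1 = {b : lp (fun _ : ℕ => ℝ) 1 | ∀ n, (-1 : ℝ) < b n} := by
  ext b
  constructor
  · rintro ⟨g, rfl⟩ n
    linarith [partialProds_pos g.2.1 n, toEll1_apply g n]
  · intro hb
    have hpos : ∀ n, 0 < b n + 1 := fun n => by linarith [hb n]
    have hprods := partialProds_successiveRatios fun n => (hpos n).ne'
    have hmem : successiveRatios (fun n => b n + 1) ∈ Gamma := by
      refine ⟨successiveRatios_pos hpos, ?_⟩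
      change Summable fun n => |partialProds _ n - 1|
      simpa [hprods] using lp.memℓp_one_iff.1 (lp.memℓp b)
    refine ⟨⟨_, hmem⟩, lp.ext (funext fun n => ?_)⟩
    simp [toEll1_apply, hprods]

end Gamma

theorem gamma_isometric_to_ell1 :
    ∃ Φ : Gamma → lp (fun _ : ℕ => ℝ) 1,
      (∀ g : Gamma, ∀ n : ℕ, (Φ g : ℕ → ℝ) n = (∏ k ∈ Finset.range (n + 1), (g : ℕ → ℝ) k) - 1) ∧
      (∀ g h : Gamma, dist (Φ g) (Φ h) = dGamma (g : ℕ → ℝ) (h : ℕ → ℝ)) ∧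
      Function.Injective Φ ∧
      (Set.range Φ = {b : lp (fun _ : ℕ => ℝ) 1 | ∀ n, (-1 : ℝ) < (b : ℕ → ℝ) n}) ∧
      IsOpen {b : lp (fun _ : ℕ => ℝ) 1 | ∀ n, (-1 : ℝ) < (b : ℕ → ℝ) n} :=
  ⟨Gamma.toEll1, fun _ _ => rfl, Gamma.dist_toEll1, Gamma.toEll1_injective, Gamma.range_toEll1,
    lp.isOpen_setOf_forall_lt_apply (by norm_num)⟩
end

section
/- The relation E on (0,1)^ℕ defined by s E s′ iff ∑_n |∏_{i≤n} (s_i/s′_i) − 1| < ∞ is an equivalence relation. -/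
/-!
Write `P n` for the `n`-th partial product of `s / s'`. Partial products are multiplicative in the
sequence, so symmetry and transitivity reduce to: the sequences `P` with `∑ ‖P n - 1‖ < ∞` are
closed under pointwise inversion and multiplication. Both follow by comparison, since such `P`
tends to `1`: eventually `‖P n‖ ≥ 1/2`, giving `‖(P n)⁻¹ - 1‖ ≤ 2 ‖P n - 1‖`, and
`P Q - 1 = (P - 1)(Q - 1) + (P - 1) + (Q - 1)` with `‖P n - 1‖ ≤ 1` eventually.
-/

open Finset Filter

lemma Summable.norm_mul_sub_one {R : Type*} [NormedRing R] {f g : ℕ → R}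
    (hf : Summable fun n => ‖f n - 1‖) (hg : Summable fun n => ‖g n - 1‖) :
    Summable fun n => ‖f n * g n - 1‖ := by
  refine Summable.of_norm_bounded_eventually_nat ((hf.mul_left 2).add hg) ?_
  have hsmall : ∀ᶠ n in atTop, ‖g n - 1‖ ≤ 1 :=
    hg.tendsto_atTop_zero.eventually (eventually_le_nhds one_pos)
  filter_upwards [hsmall] with n hn
  have hprod : ‖f n - 1‖ * ‖g n - 1‖ ≤ ‖f n - 1‖ :=
    mul_le_of_le_one_right (norm_nonneg _) hn
  calc ‖‖f n * g n - 1‖‖ = ‖(f n - 1) * (g n - 1) + (f n - 1) + (g n - 1)‖ := by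
        rw [norm_norm]; congr 1; noncomm_ring
    _ ≤ ‖f n - 1‖ * ‖g n - 1‖ + ‖f n - 1‖ + ‖g n - 1‖ :=
        norm_add₃_le.trans (by gcongr; exact norm_mul_le _ _)
    _ ≤ 2 * ‖f n - 1‖ + ‖g n - 1‖ := by linarith

lemma Summable.norm_inv_sub_one {𝕜 : Type*} [NormedField 𝕜] {f : ℕ → 𝕜}
    (hf : Summable fun n => ‖f n - 1‖) : Summable fun n => ‖(f n)⁻¹ - 1‖ := by
  refine Summable.of_norm_bounded_eventually_nat (hf.mul_left 2) ?_
  have hlarge : ∀ᶠ n in atTop, 1 / 2 < ‖f n‖ := by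
    have hlim : Tendsto f atTop (nhds 1) :=
      tendsto_iff_norm_sub_tendsto_zero.mpr hf.tendsto_atTop_zero
    simpa using hlim.norm.eventually (eventually_gt_nhds (by norm_num : (1 : ℝ) / 2 < ‖(1 : 𝕜)‖))
  filter_upwards [hlarge] with n hn
  have hpos : 0 < ‖f n‖ := by linarith
  have hne : f n ≠ 0 := norm_pos_iff.mp hpos
  rw [norm_norm, show (f n)⁻¹ - 1 = (1 - f n) / f n by field_simp, norm_div, norm_sub_rev,
    div_le_iff₀ hpos]
  nlinarith [norm_nonneg (f n - 1)]

theorem E_equivalence :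
    Equivalence (fun s s' : {s : ℕ → ℝ // ∀ n, s n ∈ Set.Ioo (0 : ℝ) 1} =>
      Summable (fun n => |(∏ i ∈ Finset.range (n + 1), (s : ℕ → ℝ) i / (s' : ℕ → ℝ) i) - 1|)) := by
  have hne (s : {s : ℕ → ℝ // ∀ n, s n ∈ Set.Ioo (0 : ℝ) 1}) (i : ℕ) : (s : ℕ → ℝ) i ≠ 0 :=
    (s.2 i).1.ne'
  simp only [← Real.norm_eq_abs]
  refine ⟨fun s => ?_, fun {s t} hst => ?_, fun {s t u} hst htu => ?_⟩
  · simp [div_self (hne s _)]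
  · refine hst.norm_inv_sub_one.congr fun n => ?_
    rw [← prod_inv_distrib]
    simp only [inv_div]
  · refine (hst.norm_mul_sub_one htu).congr fun n => ?_
    rw [← prod_mul_distrib]
    simp only [div_mul_div_cancel₀ (hne t _)]
end

section
/- Every equivalence class of the relation F on (0,1)^ℕ, defined by s F s′ iff sup_n |∑_{k<n} (∏_{i≤k} s_i − ∏_{i≤k} s′_i)| < ∞, is a meager subset of (0,1)^ℕ with the product topology. -/
/-!
If the partial sums of `∏_{i ≤ k} s_i - ∏_{i ≤ k} t_i` stay bounded, the limits of the two decreasing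
positive partial products agree: by Cesàro, their difference is the limit of the averaged partial
sums, which is `0`. The F-class of `s` is the union of the closed sets `K_m` on which the partial
sums are bounded by `m`, and `K_m` has empty interior: a basic neighbourhood constrains only finitely
many coordinates, and replacing the tail by factors `exp (g (i + 1) - g i)`, whose products
telescope, makes the limit of the partial products take two different values inside it.
-/

open Finset Filter Topology

theorem exists_forall_lt_eq_imp_mem_of_mem_nhds {X : ℕ → Type*} [∀ i, TopologicalSpace (X i)]
    {t : ∀ i, X i} {S : Set (∀ i, X i)} (hS : S ∈ 𝓝 t) :
    ∃ N, ∀ u, (∀ i < N, u i = t i) → u ∈ S := by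
  rw [nhds_pi, Filter.mem_pi'] at hS
  obtain ⟨I, V, hV, hIV⟩ := hS
  obtain ⟨N, hIN⟩ := I.exists_nat_subset_range
  refine ⟨N, fun u hu => hIV fun i hi => ?_⟩
  rw [hu i (mem_range.1 (hIN hi))]
  exact mem_of_mem_nhds (hV i)

theorem eq_zero_of_tendsto_of_abs_sum_le {u : ℕ → ℝ} {l M : ℝ} (hu : Tendsto u atTop (𝓝 l))
    (hM : ∀ n, |∑ i ∈ range n, u i| ≤ M) : l = 0 := by
  have hM₀ : 0 ≤ M := (abs_nonneg _).trans (hM 0)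
  have hmean : Tendsto (fun n : ℕ => (n⁻¹ : ℝ) * ∑ i ∈ range n, u i) atTop (𝓝 0) := by
    refine squeeze_zero_norm (a := fun n : ℕ => M * (n⁻¹ : ℝ)) (fun n => ?_) ?_
    · rw [Real.norm_eq_abs, abs_mul, abs_inv, Nat.abs_cast, mul_comm]
      exact mul_le_mul_of_nonneg_right (hM n) (by positivity)
    · simpa using (tendsto_inv_atTop_nhds_zero_nat (𝕜 := ℝ)).const_mul M
  exact tendsto_nhds_unique hu.cesaro hmean

noncomputable def partialProd (t : ℕ → Set.Ioo (0 : ℝ) 1) (k : ℕ) : ℝ :=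
  ∏ i ∈ range (k + 1), (t i : ℝ)

theorem partialProd_pos (t : ℕ → Set.Ioo (0 : ℝ) 1) (k : ℕ) : 0 < partialProd t k :=
  prod_pos fun i _ => (t i).2.1

theorem partialProd_antitone (t : ℕ → Set.Ioo (0 : ℝ) 1) : Antitone (partialProd t) := by
  refine antitone_nat_of_succ_le fun k => ?_
  rw [partialProd, prod_range_succ]
  exact mul_le_of_le_one_right (partialProd_pos t k).le (t (k + 1)).2.2.le

theorem exists_tendsto_partialProd (t : ℕ → Set.Ioo (0 : ℝ) 1) :
    ∃ L, Tendsto (partialProd t) atTop (𝓝 L) :=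
  ⟨_, tendsto_atTop_ciInf (partialProd_antitone t)
    ⟨0, Set.forall_mem_range.2 fun k => (partialProd_pos t k).le⟩⟩

theorem continuous_partialProd (k : ℕ) : Continuous fun t => partialProd t k :=
  continuous_finsetProd _ fun i _ => continuous_subtype_val.comp (continuous_apply i)

noncomputable def discrepancy (s t : ℕ → Set.Ioo (0 : ℝ) 1) (n : ℕ) : ℝ :=
  ∑ k ∈ range n, (partialProd s k - partialProd t k)

theorem isClosed_setOf_abs_discrepancy_le (s : ℕ → Set.Ioo (0 : ℝ) 1) (M : ℝ) :
    IsClosed {t | ∀ n, |discrepancy s t n| ≤ M} := by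
  simp only [Set.ofPred_forall]
  refine isClosed_iInter fun n => isClosed_le ?_ continuous_const
  exact (continuous_finsetSum _ fun k _ =>
    continuous_const.sub (continuous_partialProd k)).abs

theorem eq_of_abs_discrepancy_le {s t : ℕ → Set.Ioo (0 : ℝ) 1} {a b M : ℝ}
    (hs : Tendsto (partialProd s) atTop (𝓝 a)) (ht : Tendsto (partialProd t) atTop (𝓝 b))
    (hM : ∀ n, |discrepancy s t n| ≤ M) : a = b :=
  sub_eq_zero.1 (eq_zero_of_tendsto_of_abs_sum_le (hs.sub ht) hM)

noncomputable def splice (t : ℕ → Set.Ioo (0 : ℝ) 1) (N : ℕ) {g : ℕ → ℝ} (hg : StrictAnti g) :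
    ℕ → Set.Ioo (0 : ℝ) 1 := fun i =>
  if i < N then t i
  else ⟨Real.exp (g (i + 1) - g i), Real.exp_pos _,
    Real.exp_lt_one_iff.2 (sub_neg.2 (hg i.lt_succ_self))⟩

section splice

variable (t : ℕ → Set.Ioo (0 : ℝ) 1) (N : ℕ) {g : ℕ → ℝ} (hg : StrictAnti g)

theorem partialProd_splice {k : ℕ} (hk : N ≤ k + 1) :
    partialProd (splice t N hg) k =
      (∏ i ∈ range N, (t i : ℝ)) * Real.exp (g (k + 1) - g N) := by
  rw [partialProd, ← prod_range_mul_prod_Ico _ hk, ← sum_Ico_sub (f := g) hk, Real.exp_sum]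
  congr 1
  · exact prod_congr rfl fun i hi => by rw [splice, if_pos (mem_range.1 hi)]
  · exact prod_congr rfl fun i hi => by rw [splice, if_neg (mem_Ico.1 hi).1.not_gt]

theorem tendsto_partialProd_splice (hg₀ : Tendsto g atTop (𝓝 0)) :
    Tendsto (partialProd (splice t N hg)) atTop
      (𝓝 ((∏ i ∈ range N, (t i : ℝ)) * Real.exp (-g N))) := by
  have hlim : Tendsto (fun k => (∏ i ∈ range N, (t i : ℝ)) * Real.exp (g (k + 1) - g N))
      atTop (𝓝 ((∏ i ∈ range N, (t i : ℝ)) * Real.exp (-g N))) := by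
    simpa using (((hg₀.comp (tendsto_add_atTop_nat 1)).sub_const (g N)).rexp).const_mul
      (∏ i ∈ range N, (t i : ℝ))
  refine hlim.congr' ?_
  filter_upwards [eventually_ge_atTop N] with k hk
  exact (partialProd_splice t N hg (by omega)).symm

end splice

theorem interior_setOf_abs_discrepancy_le (s : ℕ → Set.Ioo (0 : ℝ) 1) (M : ℝ) :
    interior {t | ∀ n, |discrepancy s t n| ≤ M} = ∅ := by
  obtain ⟨a, ha⟩ := exists_tendsto_partialProd s
  refine Set.eq_empty_of_forall_notMem fun t ht => ?_
  obtain ⟨N, hN⟩ := exists_forall_lt_eq_imp_mem_of_mem_nhds (mem_interior_iff_mem_nhds.1 ht)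
  have hlim (c : ℕ) : a = (∏ i ∈ range N, (t i : ℝ)) * Real.exp (-(1 / 2 : ℝ) ^ (N + c)) := by
    have hg : StrictAnti fun i => (1 / 2 : ℝ) ^ (i + c) :=
      (pow_right_strictAnti₀ (by norm_num) (by norm_num)).comp_strictMono
        (strictMono_id.add_const c)
    have hg₀ : Tendsto (fun i => (1 / 2 : ℝ) ^ (i + c)) atTop (𝓝 0) :=
      (tendsto_pow_atTop_nhds_zero_of_lt_one (by norm_num) (by norm_num)).comp
        (tendsto_add_atTop_nat c)
    exact eq_of_abs_discrepancy_le ha (tendsto_partialProd_splice t N hg hg₀)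
      (hN _ fun i hi => if_pos hi)
  have hprod : (∏ i ∈ range N, (t i : ℝ)) ≠ 0 := (prod_pos fun i _ => (t i).2.1).ne'
  have := pow_right_injective₀ (by norm_num : (0 : ℝ) < 1 / 2) (by norm_num)
    (neg_inj.1 (Real.exp_injective (mul_left_cancel₀ hprod ((hlim 0).symm.trans (hlim 1)))))
  omega

theorem F_classes_meager (s : ℕ → Set.Ioo (0 : ℝ) 1) :
    IsMeagre {t : ℕ → Set.Ioo (0 : ℝ) 1 |
      ∃ M : ℝ, ∀ n : ℕ,
        |∑ k ∈ Finset.range n,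
          ((∏ i ∈ Finset.range (k + 1), (s i : ℝ)) - ∏ i ∈ Finset.range (k + 1), (t i : ℝ))| ≤ M} := by
  have hcover : {t : ℕ → Set.Ioo (0 : ℝ) 1 | ∃ M : ℝ, ∀ n, |discrepancy s t n| ≤ M} ⊆
      ⋃ m : ℕ, {t | ∀ n, |discrepancy s t n| ≤ m} := by
    rintro t ⟨M, hM⟩
    exact Set.mem_iUnion.2 ⟨⌈M⌉₊, fun n => (hM n).trans (Nat.le_ceil M)⟩
  refine IsMeagre.mono hcover (isMeagre_iUnion fun m => IsNowhereDense.isMeagre ?_)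
  exact (isClosed_setOf_abs_discrepancy_le s m).isNowhereDense_iff.2
    (interior_setOf_abs_discrepancy_le s m)
end

section
/- For s ∈ (0,1)^ℕ with ∏_{i≤k} s_i → 0 as k → ∞, and for any m ∈ ℕ, the set K_m = {t ∈ (0,1)^ℕ : ∀n, |∑_{k<n}(∏_{i≤k} s_i − ∏_{i≤k} t_i)| ≤ m} is nowhere dense in (0,1)^ℕ. -/
open Finset Filter

/-!
`K_m` is closed, being cut out by the continuous partial sums. Its complement is dense: every
`t` agrees on any initial segment with a sequence whose tail is `exp (-2⁻ⁱ)`, so that its partial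
products stay above some `c > 0`. As `∏ sᵢ → 0`, the partial sums of `∏ sᵢ - ∏ tᵢ` then eventually
decrease by at least `c / 2` per step and leave `[-m, m]`.
-/

theorem tendsto_sum_range_atBot_of_eventually_le_neg {f : ℕ → ℝ} {ε : ℝ} (hε : 0 < ε)
    (hf : ∀ᶠ k in atTop, f k ≤ -ε) :
    Tendsto (fun n => ∑ k ∈ range n, f k) atTop atBot := by
  obtain ⟨N, hN⟩ := eventually_atTop.1 hf
  rw [← tendsto_add_atTop_iff_nat N]
  refine tendsto_atBot_mono (fun n => ?_) <| tendsto_atBot_add_const_left _ (∑ k ∈ range N, f k)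
    (tendsto_natCast_atTop_atTop.atTop_mul_const_of_neg (neg_neg_of_pos hε))
  rw [add_comm n N, sum_range_add]
  gcongr
  calc ∑ k ∈ range n, f (N + k) ≤ ∑ _k ∈ range n, -ε := sum_le_sum fun k _ => hN _ (by omega)
    _ = n * -ε := by simp

theorem tendsto_sum_range_sub_atBot {a b : ℕ → ℝ} {c : ℝ} (ha : Tendsto a atTop (nhds 0))
    (hc : 0 < c) (hb : ∀ k, c ≤ b k) :
    Tendsto (fun n => ∑ k ∈ range n, (a k - b k)) atTop atBot := by
  refine tendsto_sum_range_atBot_of_eventually_le_neg (half_pos hc) ?_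
  filter_upwards [ha.eventually (gt_mem_nhds (half_pos hc))] with k hk
  linarith [hb k]

namespace UnitIntervalSeq

noncomputable def tail (i : ℕ) : Set.Ioo (0 : ℝ) 1 :=
  ⟨Real.exp (-(1 / 2) ^ i), Real.exp_pos _, Real.exp_lt_one_iff.2 (by simp)⟩

theorem exp_neg_two_le_prod_tail (N k : ℕ) :
    Real.exp (-2) ≤ ∏ i ∈ range k, (tail (N + i) : ℝ) := by
  simp only [tail, ← Real.exp_sum, Real.exp_le_exp, sum_neg_distrib, neg_le_neg_iff]
  calc ∑ i ∈ range k, (1 / 2 : ℝ) ^ (N + i) ≤ ∑ i ∈ range k, (1 / 2 : ℝ) ^ i :=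
        sum_le_sum fun i _ => pow_le_pow_of_le_one (by norm_num) (by norm_num) (by omega)
    _ ≤ 2 := sum_geometric_two_le k

noncomputable def patch (t : ℕ → Set.Ioo (0 : ℝ) 1) (N : ℕ) : ℕ → Set.Ioo (0 : ℝ) 1 :=
  fun i => if i < N then t i else tail i

theorem tendsto_patch (t : ℕ → Set.Ioo (0 : ℝ) 1) : Tendsto (patch t) atTop (nhds t) :=
  tendsto_pi_nhds.2 fun i => tendsto_const_nhds.congr' <|
    (eventually_gt_atTop i).mono fun _ hN => (if_pos hN).symm

theorem exists_pos_forall_le_prod_patch (t : ℕ → Set.Ioo (0 : ℝ) 1) (N : ℕ) :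
    ∃ c > 0, ∀ k, c ≤ ∏ i ∈ range k, (patch t N i : ℝ) := by
  refine ⟨(∏ i ∈ range N, (t i : ℝ)) * Real.exp (-2),
    mul_pos (prod_pos fun i _ => (t i).2.1) (Real.exp_pos _), fun k => ?_⟩
  calc (∏ i ∈ range N, (t i : ℝ)) * Real.exp (-2)
      ≤ (∏ i ∈ range N, (t i : ℝ)) * ∏ i ∈ range k, (tail (N + i) : ℝ) := by
        gcongr
        · exact prod_nonneg fun i _ => (t i).2.1.le
        · exact exp_neg_two_le_prod_tail N k
    _ = ∏ i ∈ range (N + k), (patch t N i : ℝ) := by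
        rw [prod_range_add]
        congr 1
        · exact prod_congr rfl fun i hi => by simp [patch, mem_range.1 hi]
        · exact prod_congr rfl fun i _ => by simp [patch]
    _ ≤ ∏ i ∈ range k, (patch t N i : ℝ) :=
        prod_le_prod_of_subset_of_le_one (range_subset_range.2 (by omega))
          (fun i _ => (patch t N i).2.1.le) (fun i _ _ => (patch t N i).2.2.le)

end UnitIntervalSeq

open UnitIntervalSeq in
theorem dense_setOf_prod_bounded_below :
    Dense {t : ℕ → Set.Ioo (0 : ℝ) 1 | ∃ c > 0, ∀ k, c ≤ ∏ i ∈ range k, (t i : ℝ)} := fun t =>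
  mem_closure_of_tendsto (tendsto_patch t)
    (Eventually.of_forall (exists_pos_forall_le_prod_patch t))

theorem Km_nowhere_dense (s : ℕ → Set.Ioo (0 : ℝ) 1)
    (hs : Tendsto (fun k => ∏ i ∈ Finset.range (k + 1), (s i : ℝ)) atTop (nhds 0))
    (m : ℕ) :
    IsNowhereDense {t : ℕ → Set.Ioo (0 : ℝ) 1 |
      ∀ n : ℕ,
        |∑ k ∈ Finset.range n,
          ((∏ i ∈ Finset.range (k + 1), (s i : ℝ)) - ∏ i ∈ Finset.range (k + 1), (t i : ℝ))| ≤ m} := by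
  refine (IsClosed.isNowhereDense_iff ?closed).2 (interior_eq_empty_iff_dense_compl.2 ?dense)
  case closed =>
    simp only [Set.ofPred_forall]
    exact isClosed_iInter fun n => isClosed_le (by fun_prop) continuous_const
  case dense =>
    refine dense_setOf_prod_bounded_below.mono ?_
    rintro t ⟨c, hc, ht⟩ htK
    obtain ⟨n, hn⟩ := ((tendsto_sum_range_sub_atBot hs hc fun k => ht (k + 1)).eventually
      (eventually_lt_atBot (-(m : ℝ)))).exists
    linarith [(abs_le.1 (htK n)).1]
end

section
/- The set of s ∈ (0,1)^ℕ such that the series ∑_{n} exp(−∑_{k<n} ∏_{i≤k} s_i) diverges is a dense G_δ subset of (0,1)^ℕ with the product topology. -/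
open Finset

/-!
Sequences that are eventually equal to `1/2` are dense in the product topology, and along such a
sequence the products `∏_{i ≤ k} s i` decay geometrically, so the exponents stay bounded and the terms
of the series do not tend to `0`. Divergence of a series with nonnegative terms means that for every
`M` some partial sum exceeds `M`; partial sums are continuous in `s`, so the divergence set is
`⋂ M, ⋃ n, {partial sum > M}`, a `G_δ`.
-/

open Filter

theorem not_summable_iff_forall_exists_natCast_lt_sum_range {f : ℕ → ℝ} (hf : ∀ n, 0 ≤ f n) :
    ¬Summable f ↔ ∀ M : ℕ, ∃ n, (M : ℝ) < ∑ i ∈ range n, f i := by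
  have hmono : Monotone fun n => ∑ i ∈ range n, f i := (sum_mono_set_of_nonneg hf).comp range_mono
  rw [not_summable_iff_tendsto_nat_atTop_of_nonneg hf, hmono.tendsto_atTop_atTop_iff]
  refine ⟨fun h M => ?_, fun h b => ?_⟩
  · obtain ⟨n, hn⟩ := h (M + 1)
    exact ⟨n, by linarith⟩
  · obtain ⟨n, hn⟩ := h ⌈b⌉₊
    exact ⟨n, (Nat.le_ceil b).trans hn.le⟩

theorem isGδ_setOf_not_summable {X : Type*} [TopologicalSpace X] {f : X → ℕ → ℝ}
    (hf : ∀ n, Continuous (f · n)) (hf₀ : ∀ x n, 0 ≤ f x n) :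
    IsGδ {x | ¬Summable (f x)} := by
  have hset : {x | ¬Summable (f x)} = ⋂ M : ℕ, ⋃ n, {x | (M : ℝ) < ∑ i ∈ range n, f x i} := by
    ext x
    simp only [Set.mem_ofPred_eq, Set.mem_iInter, Set.mem_iUnion,
      not_summable_iff_forall_exists_natCast_lt_sum_range (hf₀ x)]
  rw [hset]
  exact .iInter fun M => (isOpen_iUnion fun n =>
    isOpen_lt continuous_const (continuous_finsetSum _ fun i _ => hf i)).isGδ

theorem not_summable_exp_neg_sum_range_of_summable {a : ℕ → ℝ} (ha₀ : ∀ k, 0 ≤ a k)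
    (ha : Summable a) : ¬Summable fun n => Real.exp (-∑ k ∈ range n, a k) := by
  intro h
  have hlow : ∀ n, Real.exp (-∑' k, a k) ≤ Real.exp (-∑ k ∈ range n, a k) := fun n =>
    Real.exp_le_exp.2 (neg_le_neg (ha.sum_le_tsum _ fun k _ => ha₀ k))
  exact (Real.exp_pos _).not_ge
    (ge_of_tendsto' h.tendsto_atTop_zero hlow)

theorem summable_prod_range_succ_of_eventually_le {s : ℕ → ℝ} {r : ℝ} (hr : r < 1)
    (hs₀ : ∀ i, 0 ≤ s i) (hs : ∀ᶠ i in atTop, s i ≤ r) :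
    Summable fun k => ∏ i ∈ range (k + 1), s i := by
  refine summable_of_ratio_norm_eventually_le hr ?_
  filter_upwards [(tendsto_add_atTop_nat 1).eventually hs] with k hk
  have hprod : 0 ≤ ∏ i ∈ range (k + 1), s i := prod_nonneg fun i _ => hs₀ i
  rw [prod_range_succ, Real.norm_of_nonneg (mul_nonneg hprod (hs₀ _)),
    Real.norm_of_nonneg hprod, mul_comm]
  exact mul_le_mul_of_nonneg_right hk hprod

theorem dense_setOf_eventuallyEq_cofinite {ι : Type*} {X : ι → Type*}
    [∀ i, TopologicalSpace (X i)] (c : ∀ i, X i) :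
    Dense {x : ∀ i, X i | ∀ᶠ i in cofinite, x i = c i} := by
  classical
  intro x
  refine mem_closure_of_tendsto (f := fun I : Finset ι => I.piecewise x c) (b := atTop) ?_ ?_
  · refine tendsto_pi_nhds.2 fun i => tendsto_const_nhds.congr' ?_
    filter_upwards [eventually_ge_atTop {i}] with I hI
    rw [piecewise_eq_of_mem _ _ _ (singleton_subset_iff.1 hI)]
  · refine Eventually.of_forall fun I => ?_
    filter_upwards [I.finite_toSet.compl_mem_cofinite] with i hi
    exact piecewise_eq_of_notMem _ _ _ hi

theorem divergence_set_dense_Gdelta :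
    Dense {s : ℕ → Set.Ioo (0 : ℝ) 1 |
        ¬ Summable (fun n => Real.exp (-∑ k ∈ Finset.range n, ∏ i ∈ Finset.range (k + 1), (s i : ℝ)))} ∧
    IsGδ {s : ℕ → Set.Ioo (0 : ℝ) 1 |
        ¬ Summable (fun n => Real.exp (-∑ k ∈ Finset.range n, ∏ i ∈ Finset.range (k + 1), (s i : ℝ)))} := by
  constructor
  · let half : Set.Ioo (0 : ℝ) 1 := ⟨1 / 2, by norm_num, by norm_num⟩
    refine (dense_setOf_eventuallyEq_cofinite fun _ => half).mono fun s hs => ?_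
    refine not_summable_exp_neg_sum_range_of_summable
      (fun k => prod_nonneg fun i _ => (s i).2.1.le) ?_
    refine summable_prod_range_succ_of_eventually_le (r := 1 / 2) (by norm_num)
      (fun i => (s i).2.1.le) ?_
    rw [← Nat.cofinite_eq_atTop]
    filter_upwards [hs] with i hi
    rw [hi]
  · exact isGδ_setOf_not_summable (fun n => by fun_prop) fun s n => (Real.exp_pos _).le
end

section
/- If (a_n) is a sequence in (0,1] with a_0 = 1 such that (a_n/a_{n+1}) is nonincreasing (log-convexity), then there exists a sequence (b_n)_{n≥1} of non-negative real numbers such that the formal power series identity ∑_{n≥0} a_n t^n = 1/(1 − ∑_{n≥1} b_n t^n) holds, i.e., the coefficients b_n defined recursively by a_n = ∑_{k=1}^{n} b_k a_{n−k} for n ≥ 1 are all non-negative. -/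
open Finset PowerSeries

/-! The coefficients `b` are read off the power series `1 - (∑ aₙ tⁿ)⁻¹`. Their recursion
`b_{m+1} = a_{m+1} - ∑_{k=1}^m b_k a_{m+1-k}` shows `b_{m+1} ≥ 0` by strong induction: log-convexity
gives `a_{j+1} ≤ a_j · a_{m+1}/a_m` for `j ≤ m`, so with `b_1, …, b_m ≥ 0` the sum is at most
`(a_{m+1}/a_m) ∑_{k=1}^m b_k a_{m-k} = a_{m+1}`. -/

section Renewal

variable {K : Type*} [Field K] {a : ℕ → K}

noncomputable def renewalCoeff (a : ℕ → K) (n : ℕ) : K :=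
  coeff n (1 - (mk a)⁻¹)

theorem renewalCoeff_zero (ha0 : a 0 = 1) : renewalCoeff a 0 = 0 := by
  simp [renewalCoeff, ha0]

theorem mk_mul_one_sub_inv (ha0 : a 0 ≠ 0) : mk a * (1 - (mk a)⁻¹) = mk a - 1 := by
  rw [mul_sub, mul_one, PowerSeries.mul_inv_cancel _ (by rwa [constantCoeff_mk])]

theorem sum_Icc_renewalCoeff_mul (ha0 : a 0 = 1) {n : ℕ} (hn : 1 ≤ n) :
    ∑ k ∈ Icc 1 n, renewalCoeff a k * a (n - k) = a n := by
  have h : ∑ k ∈ range (n + 1), renewalCoeff a k * a (n - k) = a n := by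
    have h := congrArg (coeff n) (mk_mul_one_sub_inv (ha0 ▸ one_ne_zero))
    rw [mul_comm, coeff_mul, Nat.sum_antidiagonal_eq_sum_range_succ
      (fun i j => coeff i (1 - (mk a)⁻¹) * coeff j (mk a)), map_sub, coeff_mk, coeff_one,
      if_neg (by omega), sub_zero] at h
    simpa only [renewalCoeff, coeff_mk] using h
  rwa [range_eq_Ico, sum_eq_sum_Ico_succ_bot (Nat.succ_pos n), renewalCoeff_zero ha0, zero_mul,
    zero_add] at h

end Renewal

section LogConvex

variable {a : ℕ → ℝ}

theorem succ_le_mul_ratio_of_antitone (hpos : ∀ n, 0 < a n)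
    (hlc : Antitone fun n => a n / a (n + 1)) {j m : ℕ} (hjm : j ≤ m) :
    a (j + 1) ≤ a j * (a (m + 1) / a m) := by
  have h := hlc hjm
  rw [div_le_div_iff₀ (hpos _) (hpos _)] at h
  rw [mul_div_assoc', le_div_iff₀ (hpos m)]
  linarith

theorem nonneg_of_renewal (ha0 : a 0 = 1) (hpos : ∀ n, 0 < a n)
    (hlc : Antitone fun n => a n / a (n + 1)) {b : ℕ → ℝ}
    (hb : ∀ n, 1 ≤ n → a n = ∑ k ∈ Icc 1 n, b k * a (n - k)) :
    ∀ n, 1 ≤ n → 0 ≤ b n := by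
  intro n
  induction n using Nat.strong_induction_on with
  | _ n ih =>
  intro hn
  obtain ⟨m, rfl⟩ : ∃ m, n = m + 1 := ⟨n - 1, by omega⟩
  have hrec : b (m + 1) = a (m + 1) - ∑ k ∈ Icc 1 m, b k * a (m + 1 - k) := by
    rw [hb (m + 1) hn, sum_Icc_succ_top (by omega), Nat.sub_self, ha0]
    ring
  suffices ∑ k ∈ Icc 1 m, b k * a (m + 1 - k) ≤ a (m + 1) by linarith
  rcases Nat.eq_zero_or_pos m with rfl | hm
  · simpa using (hpos 1).le
  calc ∑ k ∈ Icc 1 m, b k * a (m + 1 - k)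
      ≤ ∑ k ∈ Icc 1 m, b k * (a (m - k) * (a (m + 1) / a m)) := by
        refine sum_le_sum fun k hk => ?_
        have hk := mem_Icc.mp hk
        refine mul_le_mul_of_nonneg_left ?_ (ih k (by omega) hk.1)
        rw [show m + 1 - k = m - k + 1 by omega]
        exact succ_le_mul_ratio_of_antitone hpos hlc (Nat.sub_le m k)
    _ = (∑ k ∈ Icc 1 m, b k * a (m - k)) * (a (m + 1) / a m) := by
        rw [sum_mul]
        exact sum_congr rfl fun k _ => by ring
    _ = a (m + 1) := by
        rw [← hb m hm, mul_div_cancel₀ _ (hpos m).ne']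

end LogConvex

theorem log_convex_NP_coefficients_general (a : ℕ → ℝ)
    (ha0 : a 0 = 1) (hpos : ∀ n, 0 < a n)
    (hlogconvex : Antitone (fun n => a n / a (n + 1))) :
    ∃ b : ℕ → ℝ,
      (∀ n : ℕ, 1 ≤ n → a n = ∑ k ∈ Finset.Icc 1 n, b k * a (n - k)) ∧
      (∀ n : ℕ, 1 ≤ n → 0 ≤ b n) := by
  have hb : ∀ n, 1 ≤ n → a n = ∑ k ∈ Icc 1 n, renewalCoeff a k * a (n - k) :=
    fun n hn => (sum_Icc_renewalCoeff_mul ha0 hn).symm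
  exact ⟨renewalCoeff a, hb, nonneg_of_renewal ha0 hpos hlogconvex hb⟩

/-- A log-convex sequence `a` in `(0,1]` with `a 0 = 1` admits non-negative
coefficients `b` with `∑ aₙ tⁿ = 1 / (1 - ∑ bₙ tⁿ)`, i.e. the coefficients defined
by the recursion `aₙ = ∑_{k=1}^n b_k a_{n-k}` are non-negative. -/
theorem log_convex_NP_coefficients (a : ℕ → ℝ)
    (ha0 : a 0 = 1) (hpos : ∀ n, 0 < a n) (hle : ∀ n, a n ≤ 1)
    (hlogconvex : Antitone (fun n => a n / a (n + 1))) :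
    ∃ b : ℕ → ℝ,
      (∀ n : ℕ, 1 ≤ n → a n = ∑ k ∈ Finset.Icc 1 n, b k * a (n - k)) ∧
      (∀ n : ℕ, 1 ≤ n → 0 ≤ b n) :=
  log_convex_NP_coefficients_general a ha0 hpos hlogconvex
end
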